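/- Consider the system dη/dν = 1 − 2ηζ + ζ² + η³ − η²ζ, dζ/dν = 1 − η − 2ηζ + ζ² + η²ζ − ηζ², and let F(η,ζ) = ((1 + (η − ζ)²)/(2ηζ − ζ² − 1))·exp(2·arctan(1/(η − ζ))) on the set G = {(η,ζ) : η ≠ ζ and 2ηζ − ζ² − 1 ≠ 0}. Then F is differentiable on G and (1 − 2ηζ + ζ² + η³ − η²ζ)·∂F/∂η(η,ζ) + (1 − η − 2ηζ + ζ² + η²ζ − ηζ²)·∂F/∂ζ(η,ζ) = 0 for all (η,ζ) ∈ G; that is, F is a general autonomous integral of the system on any domain contained in G. -/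

import Mathlib

/-!
Write `u = η - ζ` and `V = (X, Y)` for the vector field. The key identity is
`V u = X - Y = η (1 + u²)`. Hence along `V` the numerator `1 + u²` has logarithmic derivative
`2ηu`, the phase `2 arctan (1 / u)` has derivative `-2η`, and the denominator
`B = 2ηζ - ζ² - 1` satisfies `V B = 2η (u - 1) B`. The logarithmic derivative of
`F = (1 + u²) / B · exp (2 arctan (1 / u))` is therefore `2ηu - 2η (u - 1) - 2η = 0`.
-/

/-- `F(η,ζ) = ((1 + (η − ζ)²)/(2ηζ − ζ² − 1))·exp(2·arctan(1/(η − ζ)))`. -/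
noncomputable def F12 : ℝ × ℝ → ℝ :=
  fun p => ((1 + (p.1 - p.2) ^ 2) / (2 * p.1 * p.2 - p.2 ^ 2 - 1)) *
    Real.exp (2 * Real.arctan (1 / (p.1 - p.2)))

open Real
open ContinuousLinearMap (fst snd coe_fst' coe_snd')

theorem ContinuousLinearMap.map_prodMk_eq_smul_add_smul {R M : Type*} [Semiring R]
    [TopologicalSpace R] [AddCommMonoid M] [Module R M] [TopologicalSpace M]
    (L : R × R →L[R] M) (a b : R) : L (a, b) = a • L (1, 0) + b • L (0, 1) := by
  rw [← map_smul, ← map_smul, ← map_add]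
  simp

section DivMulExp

variable {E : Type*} [NormedAddCommGroup E] [NormedSpace ℝ E] {a b c : E → ℝ}
  {a' b' c' : E →L[ℝ] ℝ} {p : E}

theorem HasFDerivAt.div_mul_exp (ha : HasFDerivAt a a' p) (hb : HasFDerivAt b b' p)
    (hc : HasFDerivAt c c' p) (hbp : b p ≠ 0) :
    HasFDerivAt (fun q => a q / b q * Real.exp (c q))
      ((Real.exp (c p) / b p ^ 2) • (b p • a' - a p • b' + (a p * b p) • c')) p := by
  simp_rw [div_eq_mul_inv]
  refine ((ha.mul ((hasDerivAt_inv hbp).comp_hasFDerivAt p hb)).mul hc.exp).congr_fderiv ?_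
  refine ContinuousLinearMap.ext fun v => ?_
  simp only [Pi.mul_apply, Function.comp_apply, add_apply, sub_apply, smul_apply,
    smul_eq_mul]
  field_simp
  ring

theorem HasFDerivAt.fderiv_div_mul_exp_apply_eq_zero (ha : HasFDerivAt a a' p)
    (hb : HasFDerivAt b b' p) (hc : HasFDerivAt c c' p) (hbp : b p ≠ 0) {v : E} {α β : ℝ}
    (hav : a' v = α * a p) (hbv : b' v = β * b p) (hcv : c' v = β - α) :
    fderiv ℝ (fun q => a q / b q * Real.exp (c q)) p v = 0 := by
  rw [(ha.div_mul_exp hb hc hbp).fderiv]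
  simp only [add_apply, sub_apply, smul_apply, smul_eq_mul, hav, hbv, hcv]
  ring

end DivMulExp

section

variable (p : ℝ × ℝ)

theorem hasFDerivAt_fst_sub_snd :
    HasFDerivAt (fun q : ℝ × ℝ => q.1 - q.2) (fst ℝ ℝ ℝ - snd ℝ ℝ ℝ) p :=
  (hasFDerivAt_fst (𝕜 := ℝ)).sub (hasFDerivAt_snd (𝕜 := ℝ))

theorem hasFDerivAt_one_add_sub_sq :
    HasFDerivAt (fun q : ℝ × ℝ => 1 + (q.1 - q.2) ^ 2)
      ((2 * (p.1 - p.2)) • (fst ℝ ℝ ℝ - snd ℝ ℝ ℝ)) p :=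
  (((hasFDerivAt_fst_sub_snd p).pow 2).const_add 1).congr_fderiv (by simp [two_mul])

theorem hasFDerivAt_two_mul_mul_sub_sq_sub_one :
    HasFDerivAt (fun q : ℝ × ℝ => 2 * q.1 * q.2 - q.2 ^ 2 - 1)
      ((2 * p.2) • fst ℝ ℝ ℝ + (2 * (p.1 - p.2)) • snd ℝ ℝ ℝ) p := by
  refine ((((hasFDerivAt_fst (𝕜 := ℝ)).const_mul 2).mul (hasFDerivAt_snd (𝕜 := ℝ))).sub
    ((hasFDerivAt_snd (𝕜 := ℝ)).pow 2) |>.sub_const 1).congr_fderiv ?_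
  refine ContinuousLinearMap.ext fun v => ?_
  simp only [add_apply, sub_apply, smul_apply, coe_fst', coe_snd', smul_eq_mul, nsmul_eq_mul]
  ring

theorem hasFDerivAt_two_mul_arctan_one_div_sub (hp : p.1 ≠ p.2) :
    HasFDerivAt (fun q : ℝ × ℝ => 2 * arctan (1 / (q.1 - q.2)))
      ((-2 / (1 + (p.1 - p.2) ^ 2)) • (fst ℝ ℝ ℝ - snd ℝ ℝ ℝ)) p := by
  have hu : p.1 - p.2 ≠ 0 := sub_ne_zero.mpr hp
  simp_rw [one_div]
  refine (((hasDerivAt_inv hu).comp_hasFDerivAt p (hasFDerivAt_fst_sub_snd p)).arctan.const_mul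
    2).congr_fderiv ?_
  refine ContinuousLinearMap.ext fun v => ?_
  simp only [Function.comp_apply, sub_apply, smul_apply, coe_fst', coe_snd', smul_eq_mul]
  field_simp
  ring

end

/-- `F` is a general autonomous integral of the system
`dη/dν = 1 − 2ηζ + ζ² + η³ − η²ζ`,
`dζ/dν = 1 − η − 2ηζ + ζ² + η²ζ − ηζ²` on
`G = {(η,ζ) : η ≠ ζ ∧ 2ηζ − ζ² − 1 ≠ 0}`. -/
theorem F12_general_autonomous_integral :
    ∀ p : ℝ × ℝ, p.1 ≠ p.2 → 2 * p.1 * p.2 - p.2 ^ 2 - 1 ≠ 0 →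
      DifferentiableAt ℝ F12 p ∧
      (1 - 2 * p.1 * p.2 + p.2 ^ 2 + p.1 ^ 3 - p.1 ^ 2 * p.2) *
          fderiv ℝ F12 p (1, 0) +
        (1 - p.1 - 2 * p.1 * p.2 + p.2 ^ 2 + p.1 ^ 2 * p.2 - p.1 * p.2 ^ 2) *
          fderiv ℝ F12 p (0, 1) = 0 := by
  intro p hne hB
  have ha := hasFDerivAt_one_add_sub_sq p
  have hb := hasFDerivAt_two_mul_mul_sub_sq_sub_one p
  have hc := hasFDerivAt_two_mul_arctan_one_div_sub p hne
  refine ⟨(ha.div_mul_exp hb hc hB).differentiableAt, ?_⟩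
  refine ((fderiv ℝ F12 p).map_prodMk_eq_smul_add_smul _ _).symm.trans ?_
  have hV : (1 - 2 * p.1 * p.2 + p.2 ^ 2 + p.1 ^ 3 - p.1 ^ 2 * p.2) -
      (1 - p.1 - 2 * p.1 * p.2 + p.2 ^ 2 + p.1 ^ 2 * p.2 - p.1 * p.2 ^ 2) =
      p.1 * (1 + (p.1 - p.2) ^ 2) := by ring
  refine ha.fderiv_div_mul_exp_apply_eq_zero hb hc hB (α := 2 * p.1 * (p.1 - p.2))
    (β := 2 * p.1 * (p.1 - p.2 - 1)) ?num ?den ?phase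
  case num =>
    simp only [smul_apply, sub_apply, coe_fst', coe_snd', smul_eq_mul, hV]
    ring
  case den =>
    simp only [add_apply, smul_apply, coe_fst', coe_snd', smul_eq_mul]
    ring
  case phase =>
    have hu : 1 + (p.1 - p.2) ^ 2 ≠ 0 := by positivity
    simp only [smul_apply, sub_apply, coe_fst', coe_snd', smul_eq_mul, hV]
    field_simp
    ring
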